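/- Let |ψ^i⟩_{AB} be mutually orthogonal unit vectors and {p_i} a probability distribution, and set ρ_{AB} = Σ_i p_i |ψ^i⟩⟨ψ^i|. Then ρ_{ABE'} = Σ_i p_i |ψ^i⟩⟨ψ^i| ⊗ |i⟩⟨i|_{E'}, with {|i⟩} orthonormal in H_{E'}, is an extension of ρ_{AB} satisfying (1/2) I(A:B|E') = Σ_i p_i S(ρ_A^i), where ρ_A^i = Tr_B |ψ^i⟩⟨ψ^i|. Consequently E_sq(A:B)(ρ_{AB}) ≤ Σ_i p_i S(ρ_A^i). -/

import Mathlib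

open scoped BigOperators ComplexOrder

noncomputable section

namespace QP

/-- Von Neumann entropy of a (Hermitian) matrix, via its eigenvalues. -/
noncomputable def entropy {n : Type*} [Fintype n] [DecidableEq n] (ρ : Matrix n n ℂ) : ℝ :=
  if h : ρ.IsHermitian then -∑ i, (h.eigenvalues i) * Real.log (h.eigenvalues i) else 0

/-- A density operator: positive semidefinite with unit trace. -/
def IsState {n : Type*} [Fintype n] (ρ : Matrix n n ℂ) : Prop :=
  ρ.PosSemidef ∧ ρ.trace = 1

variable {A B C D : Type*} [Fintype A] [Fintype B] [Fintype C] [Fintype D]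

/-- Partial trace over the second tensor factor. -/
def ptraceR (ρ : Matrix (A × B) (A × B) ℂ) : Matrix A A ℂ :=
  Matrix.of fun a a' => ∑ b, ρ (a, b) (a', b)

/-- Partial trace over the first tensor factor. -/
def ptraceL (ρ : Matrix (A × B) (A × B) ℂ) : Matrix B B ℂ :=
  Matrix.of fun b b' => ∑ a, ρ (a, b) (a, b')

/-- Reduced state on `A × C` of a tripartite state on `A × B × C`. -/
def redAC (ρ : Matrix (A × B × C) (A × B × C) ℂ) : Matrix (A × C) (A × C) ℂ :=
  Matrix.of fun x y => ∑ b, ρ (x.1, b, x.2) (y.1, b, y.2)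

/-- Reduced state on `B × C`. -/
def redBC (ρ : Matrix (A × B × C) (A × B × C) ℂ) : Matrix (B × C) (B × C) ℂ :=
  Matrix.of fun x y => ∑ a, ρ (a, x.1, x.2) (a, y.1, y.2)

/-- Reduced state on `A × B`. -/
def redAB (ρ : Matrix (A × B × C) (A × B × C) ℂ) : Matrix (A × B) (A × B) ℂ :=
  Matrix.of fun x y => ∑ c, ρ (x.1, x.2, c) (y.1, y.2, c)

/-- Reduced state on `C`. -/
def redC (ρ : Matrix (A × B × C) (A × B × C) ℂ) : Matrix C C ℂ :=
  Matrix.of fun c c' => ∑ a, ∑ b, ρ (a, b, c) (a, b, c')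

/-- Quantum conditional mutual information `I(A:B|C)`. -/
noncomputable def cmi [DecidableEq A] [DecidableEq B] [DecidableEq C]
    (ρ : Matrix (A × B × C) (A × B × C) ℂ) : ℝ :=
  entropy (redAC ρ) + entropy (redBC ρ) - entropy ρ - entropy (redC ρ)

/-- Quantum mutual information `I(A:B)`. -/
noncomputable def mutInfo [DecidableEq A] [DecidableEq B]
    (ρ : Matrix (A × B) (A × B) ℂ) : ℝ :=
  entropy (ptraceR ρ) + entropy (ptraceL ρ) - entropy ρ

/-- Squashed entanglement: infimum of `I(A:B|E')/2` over finite-dimensional extensions. -/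
noncomputable def Esq [DecidableEq A] [DecidableEq B] (ρ : Matrix (A × B) (A × B) ℂ) : ℝ :=
  sInf { x : ℝ | ∃ (n : ℕ) (σ : Matrix (A × B × Fin n) (A × B × Fin n) ℂ),
    IsState σ ∧ redAB σ = ρ ∧ x = cmi σ / 2 }

/-- Puffed entanglement: supremum of `I(A:B|E')/2` over finite-dimensional extensions. -/
noncomputable def Epu [DecidableEq A] [DecidableEq B] (ρ : Matrix (A × B) (A × B) ℂ) : ℝ :=
  sSup { x : ℝ | ∃ (n : ℕ) (σ : Matrix (A × B × Fin n) (A × B × Fin n) ℂ),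
    IsState σ ∧ redAB σ = ρ ∧ x = cmi σ / 2 }

/-- Rank-one projector `|ψ⟩⟨ψ|`. -/
def outer {n : Type*} (ψ : n → ℂ) : Matrix n n ℂ :=
  Matrix.of fun x y => ψ x * star (ψ y)

/-- `ψ` is a unit vector. -/
def IsUnitVec {n : Type*} [Fintype n] (ψ : n → ℂ) : Prop :=
  ∑ x, Complex.normSq (ψ x) = 1

/-- Four-partite reductions (system order `A × B × D × C`, with `D` playing `A'`). -/
def r4AC (ρ : Matrix (A × B × D × C) (A × B × D × C) ℂ) : Matrix (A × C) (A × C) ℂ :=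
  Matrix.of fun x y => ∑ b, ∑ d, ρ (x.1, b, d, x.2) (y.1, b, d, y.2)

def r4BC (ρ : Matrix (A × B × D × C) (A × B × D × C) ℂ) : Matrix (B × C) (B × C) ℂ :=
  Matrix.of fun x y => ∑ a, ∑ d, ρ (a, x.1, d, x.2) (a, y.1, d, y.2)

def r4ABC (ρ : Matrix (A × B × D × C) (A × B × D × C) ℂ) : Matrix (A × B × C) (A × B × C) ℂ :=
  Matrix.of fun x y => ∑ d, ρ (x.1, x.2.1, d, x.2.2) (y.1, y.2.1, d, y.2.2)

def r4C (ρ : Matrix (A × B × D × C) (A × B × D × C) ℂ) : Matrix C C ℂ :=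
  Matrix.of fun c c' => ∑ a, ∑ b, ∑ d, ρ (a, b, d, c) (a, b, d, c')

def r4A (ρ : Matrix (A × B × D × C) (A × B × D × C) ℂ) : Matrix A A ℂ :=
  Matrix.of fun a a' => ∑ b, ∑ d, ∑ c, ρ (a, b, d, c) (a', b, d, c)

def r4D (ρ : Matrix (A × B × D × C) (A × B × D × C) ℂ) : Matrix D D ℂ :=
  Matrix.of fun d d' => ∑ a, ∑ b, ∑ c, ρ (a, b, d, c) (a, b, d', c)

def r4AD (ρ : Matrix (A × B × D × C) (A × B × D × C) ℂ) : Matrix (A × D) (A × D) ℂ :=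
  Matrix.of fun x y => ∑ b, ∑ c, ρ (x.1, b, x.2, c) (y.1, b, y.2, c)

def r4DC (ρ : Matrix (A × B × D × C) (A × B × D × C) ℂ) : Matrix (D × C) (D × C) ℂ :=
  Matrix.of fun x y => ∑ a, ∑ b, ρ (a, b, x.1, x.2) (a, b, y.1, y.2)

/-- `I(A:B|C)` for a four-partite state on `A × B × D × C`, conditioning on the last factor. -/
noncomputable def cmi4 [DecidableEq A] [DecidableEq B] [DecidableEq C] [DecidableEq D]
    (ρ : Matrix (A × B × D × C) (A × B × D × C) ℂ) : ℝ :=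
  entropy (r4AC ρ) + entropy (r4BC ρ) - entropy (r4ABC ρ) - entropy (r4C ρ)

end QP

open QP

/-!
Record which pure state was drawn in an orthonormal flag register `E'`. Each of the four states
entering `I(A:B|E')` is then block diagonal in the flag, with blocks `pᵢ τⁱ` for unit-trace `τⁱ`,
so its entropy is `H(p) + Σᵢ pᵢ S(τⁱ)`. On `ABE'` the blocks are pure and on `E'` they are
scalars, so `S(τⁱ) = 0`; on `AE'` and `BE'` they are the two marginals `M Mᴴ` and `(Mᴴ M)ᵀ` of
`ψⁱ`, `M` its coefficient matrix, which have the same entropy since `M Mᴴ` and `Mᴴ M` have the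
same nonzero spectrum. The `H(p)` terms cancel and `I(A:B|E') = 2 Σᵢ pᵢ S(ρ_Aⁱ)`.
Spectra are compared through characteristic polynomials.
-/

open Matrix Polynomial Real

namespace QP

section Entropy

variable {m n o : Type*} [Fintype m] [Fintype n] [Fintype o] [DecidableEq m]

theorem entropy_eq_sum_negMulLog {M : Matrix m m ℂ} (hM : M.IsHermitian) :
    entropy M = ∑ i, negMulLog (hM.eigenvalues i) := by
  simp [entropy, hM, negMulLog, Finset.sum_neg_distrib]

theorem entropy_eq_sum_roots_charpoly {M : Matrix m m ℂ} (hM : M.IsHermitian) :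
    entropy M = (M.charpoly.roots.map fun z => negMulLog z.re).sum := by
  rw [entropy_eq_sum_negMulLog hM, hM.roots_charpoly_eq_eigenvalues, Multiset.map_map]
  simp [Function.comp_def]

/-- Zero eigenvalues do not contribute to the entropy, since `negMulLog 0 = 0`. -/
theorem entropy_eq_of_X_pow_mul_charpoly_eq [DecidableEq n] {M : Matrix m m ℂ}
    {N : Matrix n n ℂ} (hM : M.IsHermitian) (hN : N.IsHermitian) {k l : ℕ}
    (h : X ^ k * M.charpoly = X ^ l * N.charpoly) : entropy M = entropy N := by
  have hroots := congrArg Polynomial.roots h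
  rw [roots_mul (mul_ne_zero (pow_ne_zero _ X_ne_zero) M.charpoly_monic.ne_zero),
    roots_mul (mul_ne_zero (pow_ne_zero _ X_ne_zero) N.charpoly_monic.ne_zero),
    roots_X_pow, roots_X_pow] at hroots
  have := congrArg (fun s => (s.map fun z : ℂ => negMulLog z.re).sum) hroots
  simpa [entropy_eq_sum_roots_charpoly, hM, hN, Multiset.map_nsmul, Multiset.sum_nsmul] using this

theorem entropy_eq_sum_negMulLog_of_charpoly_eq {M : Matrix m m ℂ} (hM : M.IsHermitian) (d : n → ℝ)
    (h : M.charpoly = ∏ i, (X - C (d i : ℂ))) : entropy M = ∑ i, negMulLog (d i) := by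
  have hroots : M.charpoly.roots = Finset.univ.val.map fun i => (d i : ℂ) := by
    simpa [h] using roots_multiset_prod_X_sub_C (Finset.univ.val.map fun i => (d i : ℂ))
  simp [entropy_eq_sum_roots_charpoly hM, hroots]

theorem entropy_diagonal (d : m → ℝ) :
    entropy (diagonal fun i => (d i : ℂ)) = ∑ i, negMulLog (d i) :=
  entropy_eq_sum_negMulLog_of_charpoly_eq (isHermitian_diagonal_of_self_adjoint _ (by ext; simp)) d
    (charpoly_diagonal _)

theorem entropy_submatrix_equiv [DecidableEq n] (M : Matrix m m ℂ) (e : n ≃ m) :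
    entropy (M.submatrix e e) = entropy M := by
  by_cases hM : M.IsHermitian
  · refine entropy_eq_of_X_pow_mul_charpoly_eq (hM.submatrix e) hM (k := 0) (l := 0) ?_
    exact congrArg _ (charpoly_reindex e.symm M)
  · have hM' : ¬ (M.submatrix e e).IsHermitian := fun h => hM (by simpa using h.submatrix e.symm)
    simp [entropy, hM, hM']

theorem entropy_transpose {M : Matrix m m ℂ} (hM : M.IsHermitian) : entropy Mᵀ = entropy M :=
  entropy_eq_of_X_pow_mul_charpoly_eq hM.transpose hM (k := 0) (l := 0) (by simp)

theorem entropy_mul_conjTranspose_comm [DecidableEq n] (M : Matrix m n ℂ) :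
    entropy (M * Mᴴ) = entropy (Mᴴ * M) :=
  entropy_eq_of_X_pow_mul_charpoly_eq (isHermitian_mul_conjTranspose_self M)
    (isHermitian_conjTranspose_mul_self M) (charpoly_mul_comm' M Mᴴ)

theorem charmatrix_blockDiagonal [DecidableEq o] {R : Type*} [CommRing R]
    (M : o → Matrix m m R) :
    charmatrix (blockDiagonal M) = blockDiagonal fun i => charmatrix (M i) := by
  ext ⟨a, i⟩ ⟨b, j⟩ : 2
  simp only [charmatrix_apply, blockDiagonal_apply, diagonal_apply, Prod.mk.injEq]
  split_ifs <;> simp_all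

theorem charpoly_blockDiagonal [DecidableEq o] {R : Type*} [CommRing R] (M : o → Matrix m m R) :
    (blockDiagonal M).charpoly = ∏ i, (M i).charpoly := by
  rw [charpoly, charmatrix_blockDiagonal, det_blockDiagonal]; rfl

theorem _root_.Matrix.IsHermitian.charpoly_ofReal_smul {G : Matrix m m ℂ} (hG : G.IsHermitian)
    (c : ℝ) : ((c : ℂ) • G).charpoly = ∏ i, (X - C ((c * hG.eigenvalues i : ℝ) : ℂ)) := by
  conv_lhs => rw [hG.spectral_theorem, Unitary.conjStarAlgAut_apply, ← Matrix.smul_mul,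
    ← Matrix.mul_smul, charpoly_mul_comm, ← mul_assoc]
  rw [← diagonal_smul, Unitary.coe_star_mul_self, one_mul, charpoly_diagonal]
  simp

theorem _root_.Matrix.IsHermitian.sum_eigenvalues_eq_one {G : Matrix m m ℂ} (hG : G.IsHermitian)
    (htr : G.trace = 1) : ∑ i, hG.eigenvalues i = 1 := by
  simpa [htr] using (congrArg Complex.re hG.trace_eq_sum_eigenvalues).symm

theorem entropy_blockDiagonal_ofReal_smul [DecidableEq o] (p : o → ℝ) {G : o → Matrix m m ℂ}
    (hG : ∀ i, (G i).IsHermitian) (htr : ∀ i, (G i).trace = 1) :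
    entropy (blockDiagonal fun i => (p i : ℂ) • G i) =
      ∑ i, negMulLog (p i) + ∑ i, p i * entropy (G i) := by
  have hH : (blockDiagonal fun i => (p i : ℂ) • G i).IsHermitian :=
    isHermitian_blockDiagonal_iff.2 fun i => (hG i).smul (Complex.conj_ofReal (p i))
  rw [entropy_eq_sum_negMulLog_of_charpoly_eq hH (fun x : m × o => p x.2 * (hG x.2).eigenvalues x.1)]
  · simp [Fintype.sum_prod_type_right, negMulLog_mul, Finset.sum_add_distrib, ← Finset.sum_mul,
      ← Finset.mul_sum, (hG _).sum_eigenvalues_eq_one (htr _), entropy_eq_sum_negMulLog (hG _)]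
  · rw [charpoly_blockDiagonal, Fintype.prod_prod_type_right]
    exact Finset.prod_congr rfl fun i _ => (hG i).charpoly_ofReal_smul (p i)

theorem IsState.entropy_nonneg {ρ : Matrix m m ℂ} (hρ : IsState ρ) : 0 ≤ entropy ρ := by
  have hH := hρ.1.isHermitian
  rw [entropy_eq_sum_negMulLog hH]
  refine Finset.sum_nonneg fun i _ => negMulLog_nonneg (hρ.1.eigenvalues_nonneg i) ?_
  calc hH.eigenvalues i ≤ ∑ j, hH.eigenvalues j :=
        Finset.single_le_sum (fun j _ => hρ.1.eigenvalues_nonneg j) (Finset.mem_univ i)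
    _ = 1 := hH.sum_eigenvalues_eq_one hρ.2

end Entropy

section PureStates

theorem outer_eq_vecMulVec {m : Type*} (ψ : m → ℂ) : outer ψ = vecMulVec ψ (star ψ) := rfl

variable {m : Type*} [Fintype m]

theorem IsUnitVec.star_dotProduct_self {ψ : m → ℂ} (hψ : IsUnitVec ψ) : star ψ ⬝ᵥ ψ = 1 := by
  simpa [dotProduct, Complex.normSq_eq_conj_mul_self] using congrArg (fun r : ℝ => (r : ℂ)) hψ

theorem IsUnitVec.isState_outer {ψ : m → ℂ} (hψ : IsUnitVec ψ) : IsState (outer ψ) := by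
  refine ⟨posSemidef_vecMulVec_self_star ψ, ?_⟩
  rw [outer_eq_vecMulVec, trace_vecMulVec, dotProduct_comm, hψ.star_dotProduct_self]

theorem IsUnitVec.entropy_outer [DecidableEq m] {ψ : m → ℂ} (hψ : IsUnitVec ψ) :
    entropy (outer ψ) = 0 := by
  have hcol : (replicateCol Unit ψ)ᴴ * replicateCol Unit ψ = diagonal fun _ => ((1 : ℝ) : ℂ) := by
    ext
    simpa [mul_apply, dotProduct] using hψ.star_dotProduct_self
  rw [outer_eq_vecMulVec, vecMulVec_eq Unit, ← conjTranspose_replicateCol,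
    entropy_mul_conjTranspose_comm, hcol, entropy_diagonal]
  simp

variable {A B : Type*}

theorem trace_ptraceR [Fintype A] [Fintype B] (ρ : Matrix (A × B) (A × B) ℂ) :
    (ptraceR ρ).trace = ρ.trace := by
  simp [ptraceR, trace, Fintype.sum_prod_type]

theorem trace_ptraceL [Fintype A] [Fintype B] (ρ : Matrix (A × B) (A × B) ℂ) :
    (ptraceL ρ).trace = ρ.trace := by
  simp [ptraceL, trace, Fintype.sum_prod_type_right]

theorem trace_redC [Fintype A] [Fintype B] {C : Type*} [Fintype C]
    (ρ : Matrix (A × B × C) (A × B × C) ℂ) : (redC ρ).trace = ρ.trace := by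
  simp only [redC, trace, diag, of_apply, Fintype.sum_prod_type]
  rw [Finset.sum_comm]
  exact Finset.sum_congr rfl fun _ _ => Finset.sum_comm

theorem ptraceR_outer [Fintype B] (ψ : A × B → ℂ) :
    ptraceR (outer ψ) = of (Function.curry ψ) * (of (Function.curry ψ))ᴴ := by
  ext a a'
  simp [ptraceR, outer, mul_apply]

theorem ptraceL_outer [Fintype A] (ψ : A × B → ℂ) :
    ptraceL (outer ψ) = ((of (Function.curry ψ))ᴴ * of (Function.curry ψ))ᵀ := by
  ext b b'
  simp [ptraceL, outer, mul_apply, mul_comm]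

variable [Fintype A] [Fintype B]

theorem IsUnitVec.isState_ptraceR_outer {ψ : A × B → ℂ} (hψ : IsUnitVec ψ) :
    IsState (ptraceR (outer ψ)) :=
  ⟨ptraceR_outer ψ ▸ posSemidef_self_mul_conjTranspose _, by
    rw [trace_ptraceR, hψ.isState_outer.2]⟩

theorem IsUnitVec.isState_ptraceL_outer {ψ : A × B → ℂ} (hψ : IsUnitVec ψ) :
    IsState (ptraceL (outer ψ)) :=
  ⟨ptraceL_outer ψ ▸ (posSemidef_conjTranspose_mul_self _).transpose, by
    rw [trace_ptraceL, hψ.isState_outer.2]⟩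

theorem entropy_ptraceL_outer [DecidableEq A] [DecidableEq B] (ψ : A × B → ℂ) :
    entropy (ptraceL (outer ψ)) = entropy (ptraceR (outer ψ)) := by
  rw [ptraceL_outer, ptraceR_outer, entropy_transpose (isHermitian_conjTranspose_mul_self _),
    entropy_mul_conjTranspose_comm]

end PureStates

end QP

theorem Matrix.PosSemidef.blockDiagonal {m o R : Type*} [Fintype m] [Fintype o] [DecidableEq o]
    [CommRing R] [PartialOrder R] [StarRing R] [AddLeftMono R] {M : o → Matrix m m R} (hM : ∀ i, (M i).PosSemidef) : (blockDiagonal M).PosSemidef := by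
  refine .of_dotProduct_mulVec_nonneg (isHermitian_blockDiagonal_iff.2 fun i => (hM i).1)
    fun x => ?_
  have hblocks : star x ⬝ᵥ (Matrix.blockDiagonal M *ᵥ x) =
      ∑ i, star (fun a => x (a, i)) ⬝ᵥ (M i *ᵥ fun a => x (a, i)) := by
    simp [dotProduct, mulVec, blockDiagonal_apply, Fintype.sum_prod_type_right, Finset.mul_sum]
  rw [hblocks]
  exact Finset.sum_nonneg fun i _ => (hM i).dotProduct_mulVec_nonneg _

namespace QP

section Flagged

variable {A B I : Type*} [DecidableEq I]

/-- `Σᵢ pᵢ |ψⁱ⟩⟨ψⁱ| ⊗ |i⟩⟨i|`, with the flag register `I` as the last factor. -/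
def flaggedExtension (p : I → ℝ) (ψ : I → A × B → ℂ) : Matrix (A × B × I) (A × B × I) ℂ :=
  of fun x y => if x.2.2 = y.2.2
    then (p x.2.2 : ℂ) * ψ x.2.2 (x.1, x.2.1) * star (ψ x.2.2 (y.1, y.2.1)) else 0

variable (p : I → ℝ) (ψ : I → A × B → ℂ)

theorem flaggedExtension_eq_submatrix_blockDiagonal :
    flaggedExtension p ψ = (blockDiagonal fun i => (p i : ℂ) • outer (ψ i)).submatrix
      (Equiv.prodAssoc A B I).symm (Equiv.prodAssoc A B I).symm := by
  ext ⟨a, b, i⟩ ⟨a', b', j⟩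
  simp [flaggedExtension, blockDiagonal_apply, outer, mul_assoc]

theorem redAB_flaggedExtension [Fintype I] :
    redAB (flaggedExtension p ψ) = ∑ i, (p i : ℂ) • outer (ψ i) := by
  ext x y
  simp [redAB, flaggedExtension, outer, Matrix.sum_apply, mul_assoc]

theorem redAC_flaggedExtension [Fintype B] :
    redAC (flaggedExtension p ψ) = blockDiagonal fun i => (p i : ℂ) • ptraceR (outer (ψ i)) := by
  ext ⟨a, i⟩ ⟨a', j⟩
  by_cases hij : i = j
  · subst hij
    simp [redAC, flaggedExtension, ptraceR, outer, Finset.mul_sum, mul_assoc]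
  · simp [redAC, flaggedExtension, hij, blockDiagonal_apply_ne]

theorem redBC_flaggedExtension [Fintype A] :
    redBC (flaggedExtension p ψ) = blockDiagonal fun i => (p i : ℂ) • ptraceL (outer (ψ i)) := by
  ext ⟨b, i⟩ ⟨b', j⟩
  by_cases hij : i = j
  · subst hij
    simp [redBC, flaggedExtension, ptraceL, outer, Finset.mul_sum, mul_assoc]
  · simp [redBC, flaggedExtension, hij, blockDiagonal_apply_ne]

variable {ψ} [Fintype A] [Fintype B]

theorem redC_flaggedExtension (hψ : ∀ i, IsUnitVec (ψ i)) :
    redC (flaggedExtension p ψ) = diagonal fun i => (p i : ℂ) := by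
  ext i j
  by_cases hij : i = j
  · subst hij
    have hnorm : ∑ a, ∑ b, ψ i (a, b) * starRingEnd ℂ (ψ i (a, b)) = 1 := by
      simpa [dotProduct, Fintype.sum_prod_type, mul_comm] using (hψ i).star_dotProduct_self
    simp [redC, flaggedExtension, mul_assoc, ← Finset.mul_sum, hnorm]
  · simp [redC, flaggedExtension, hij]

variable {p} [Fintype I]

theorem isState_flaggedExtension (hp0 : ∀ i, 0 ≤ p i) (hp1 : ∑ i, p i = 1)
    (hψ : ∀ i, IsUnitVec (ψ i)) : IsState (flaggedExtension p ψ) := by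
  refine ⟨?_, ?_⟩
  · rw [flaggedExtension_eq_submatrix_blockDiagonal]
    exact (PosSemidef.blockDiagonal fun i =>
      (hψ i).isState_outer.1.smul (by exact_mod_cast hp0 i)).submatrix _
  · rw [← trace_redC, redC_flaggedExtension p hψ, trace_diagonal]
    exact_mod_cast hp1

theorem cmi_flaggedExtension [DecidableEq A] [DecidableEq B] (hψ : ∀ i, IsUnitVec (ψ i)) :
    cmi (flaggedExtension p ψ) = 2 * ∑ i, p i * entropy (ptraceR (outer (ψ i))) := by
  have hR i := (hψ i).isState_ptraceR_outer
  have hL i := (hψ i).isState_ptraceL_outer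
  rw [cmi, redAC_flaggedExtension, redBC_flaggedExtension, redC_flaggedExtension p hψ,
    flaggedExtension_eq_submatrix_blockDiagonal, entropy_submatrix_equiv,
    entropy_blockDiagonal_ofReal_smul p (fun i => (hR i).1.1) (fun i => (hR i).2),
    entropy_blockDiagonal_ofReal_smul p (fun i => (hL i).1.1) (fun i => (hL i).2),
    entropy_blockDiagonal_ofReal_smul p (fun i => (hψ i).isState_outer.1.1)
      (fun i => (hψ i).isState_outer.2), entropy_diagonal]
  simp only [entropy_ptraceL_outer, (hψ _).entropy_outer, mul_zero, Finset.sum_const_zero]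
  ring

end Flagged

section Squashed

variable {A B E F : Type*} [Fintype E] [Fintype F]

theorem IsState.submatrix_equiv {n m : Type*} [Fintype n] [Fintype m] {ρ : Matrix m m ℂ}
    (hρ : IsState ρ) (e : n ≃ m) : IsState (ρ.submatrix e e) :=
  ⟨hρ.1.submatrix e, by rw [← hρ.2]; exact e.sum_comp fun x => ρ x x⟩

theorem redAB_submatrix_prodCongr (ρ : Matrix (A × B × E) (A × B × E) ℂ) (e : F ≃ E) :
    redAB (ρ.submatrix ((Equiv.refl A).prodCongr ((Equiv.refl B).prodCongr e))
      ((Equiv.refl A).prodCongr ((Equiv.refl B).prodCongr e))) = redAB ρ := by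
  ext x y
  exact e.sum_comp fun c => ρ (x.1, x.2, c) (y.1, y.2, c)

variable [Fintype A] [Fintype B] [DecidableEq A] [DecidableEq B] [DecidableEq E]

theorem cmi_submatrix_prodCongr [DecidableEq F] (ρ : Matrix (A × B × E) (A × B × E) ℂ)
    (e : F ≃ E) :
    cmi (ρ.submatrix ((Equiv.refl A).prodCongr ((Equiv.refl B).prodCongr e))
      ((Equiv.refl A).prodCongr ((Equiv.refl B).prodCongr e))) = cmi ρ := by
  rw [cmi, cmi, entropy_submatrix_equiv,
    show redAC _ = (redAC ρ).submatrix ((Equiv.refl A).prodCongr e) ((Equiv.refl A).prodCongr e)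
      from rfl,
    show redBC _ = (redBC ρ).submatrix ((Equiv.refl B).prodCongr e) ((Equiv.refl B).prodCongr e)
      from rfl,
    show redC _ = (redC ρ).submatrix e e from rfl,
    entropy_submatrix_equiv, entropy_submatrix_equiv, entropy_submatrix_equiv]

theorem Esq_redAB_le_half_cmi {σ : Matrix (A × B × E) (A × B × E) ℂ} (hσ : IsState σ)
    (hcmi : 0 ≤ cmi σ) : Esq (redAB σ) ≤ cmi σ / 2 := by
  set e := (Fintype.equivFin E).symm
  set f := (Equiv.refl A).prodCongr ((Equiv.refl B).prodCongr e)
  have hmem : cmi σ / 2 ∈ { x : ℝ | ∃ (n : ℕ) (τ : Matrix (A × B × Fin n) (A × B × Fin n) ℂ),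
      IsState τ ∧ redAB τ = redAB σ ∧ x = cmi τ / 2 } :=
    ⟨_, σ.submatrix f f, hσ.submatrix_equiv f, redAB_submatrix_prodCongr σ e,
      by rw [cmi_submatrix_prodCongr]⟩
  by_cases hbdd : BddBelow { x : ℝ | ∃ (n : ℕ) (τ : Matrix (A × B × Fin n) (A × B × Fin n) ℂ),
      IsState τ ∧ redAB τ = redAB σ ∧ x = cmi τ / 2 }
  · exact csInf_le hbdd hmem
  · -- Without strong subadditivity the set might be unbounded below, and then `sInf = 0`.
    rw [Esq, Real.sInf_of_not_bddBelow hbdd]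
    positivity

end Squashed

end QP

theorem Esq_le_entanglement_of_formation_general
    {A B I : Type*} [Fintype A] [Fintype B] [Fintype I]
    [DecidableEq A] [DecidableEq B] [DecidableEq I]
    (p : I → ℝ) (hp0 : ∀ i, 0 ≤ p i) (hp1 : ∑ i, p i = 1)
    (ψi : I → (A × B → ℂ)) (hψi : ∀ i, IsUnitVec (ψi i))
    (ρ : Matrix (A × B) (A × B) ℂ)
    (hρ : ρ = ∑ i, (p i : ℂ) • outer (ψi i))
    (σ : Matrix (A × B × I) (A × B × I) ℂ)
    (hσ : ∀ x y : A × B × I, σ x y =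
      if x.2.2 = y.2.2
      then (p x.2.2 : ℂ) * ψi x.2.2 (x.1, x.2.1) * star (ψi x.2.2 (y.1, y.2.1))
      else 0) :
    redAB σ = ρ ∧
    cmi σ / 2 = ∑ i, p i * entropy (ptraceR (outer (ψi i))) ∧
    Esq ρ ≤ ∑ i, p i * entropy (ptraceR (outer (ψi i))) := by
  obtain rfl : σ = flaggedExtension p ψi := Matrix.ext hσ
  have hred : redAB (flaggedExtension p ψi) = ρ := by rw [redAB_flaggedExtension, hρ]
  have hcmi : cmi (flaggedExtension p ψi) / 2 = ∑ i, p i * entropy (ptraceR (outer (ψi i))) := by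
    rw [cmi_flaggedExtension hψi]; ring
  have hcmi_nonneg : 0 ≤ cmi (flaggedExtension p ψi) := by
    rw [cmi_flaggedExtension hψi]
    exact mul_nonneg zero_le_two (Finset.sum_nonneg fun i _ =>
      mul_nonneg (hp0 i) (hψi i).isState_ptraceR_outer.entropy_nonneg)
  refine ⟨hred, hcmi, ?_⟩
  rw [← hred, ← hcmi]
  exact Esq_redAB_le_half_cmi (isState_flaggedExtension hp0 hp1 hψi) hcmi_nonneg

/-- the flagged extension of `ρ = Σᵢ pᵢ |ψⁱ⟩⟨ψⁱ|` (with orthogonal `|ψⁱ⟩`)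
is an extension with `(1/2) I(A:B|E') = Σᵢ pᵢ S(ρ_Aⁱ)`, hence `E_sq ≤ Σᵢ pᵢ S(ρ_Aⁱ)`. -/
theorem Esq_le_entanglement_of_formation
    {A B I : Type*} [Fintype A] [Fintype B] [Fintype I]
    [DecidableEq A] [DecidableEq B] [DecidableEq I]
    (p : I → ℝ) (hp0 : ∀ i, 0 ≤ p i) (hp1 : ∑ i, p i = 1)
    (ψi : I → (A × B → ℂ)) (hψi : ∀ i, IsUnitVec (ψi i))
    (horth : ∀ i j, i ≠ j → ∑ z, star (ψi i z) * ψi j z = 0)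
    (ρ : Matrix (A × B) (A × B) ℂ)
    (hρ : ρ = ∑ i, (p i : ℂ) • outer (ψi i))
    (σ : Matrix (A × B × I) (A × B × I) ℂ)
    (hσ : ∀ x y : A × B × I, σ x y =
      if x.2.2 = y.2.2
      then (p x.2.2 : ℂ) * ψi x.2.2 (x.1, x.2.1) * star (ψi x.2.2 (y.1, y.2.1))
      else 0) :
    redAB σ = ρ ∧
    cmi σ / 2 = ∑ i, p i * entropy (ptraceR (outer (ψi i))) ∧
    Esq ρ ≤ ∑ i, p i * entropy (ptraceR (outer (ψi i))) :=
  Esq_le_entanglement_of_formation_general p hp0 hp1 ψi hψi ρ hρ σ hσ
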